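/- The braid shelf operation a ◃ b := a · sh(b) · σ1 · sh(a)⁻¹ on the infinite braid group B∞ obeys the left selfdistributivity law: a ◃ (b ◃ c) = (a ◃ b) ◃ (a ◃ c) for all a, b, c ∈ B∞. -/

import Mathlib

/-- The braid relations on the generators `σ₁, σ₂, …` (generator `i : ℕ` stands
for `σ_{i+1}`): `σi σj = σj σi` for `|i − j| ≥ 2` and `σi σj σi = σj σi σj`
for `|i − j| = 1`, written as relators. -/
def braidRels : Set (FreeGroup ℕ) :=
  {r | ∃ i j : ℕ,
    (i + 2 ≤ j ∧
      r = FreeGroup.of i * FreeGroup.of j * (FreeGroup.of i)⁻¹ * (FreeGroup.of j)⁻¹) ∨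
    (j = i + 1 ∧
      r = FreeGroup.of i * FreeGroup.of j * FreeGroup.of i *
        (FreeGroup.of j)⁻¹ * (FreeGroup.of i)⁻¹ * (FreeGroup.of j)⁻¹)}

/-- The braid group `B∞` on infinitely many strands, as a presented group. -/
abbrev BInf : Type := PresentedGroup braidRels

/-- The generator `σ_{i+1}` of `B∞`; in particular `σ 0` is `σ₁`. -/
def σ (i : ℕ) : BInf := PresentedGroup.of i

/-- The braid shelf operation `a ◃ b := a * sh b * σ₁ * (sh a)⁻¹`,
relative to the shift endomorphism `sh`. -/
def braidAct (sh : BInf →* BInf) (a b : BInf) : BInf :=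
  a * sh b * σ 0 * (sh a)⁻¹

/-! The law holds for `a ◃ b := a * sh b * s * (sh a)⁻¹` in any group with an endomorphism `sh`
as soon as `s` and `sh s` satisfy the braid relation and `s` commutes with the image of `sh ∘ sh`:
expanding both sides, the difference is absorbed by `t s t⁻¹ = s⁻¹ t s` for `t = sh s`. In `B∞`
with `s = σ₁` both conditions are braid relations, the second because `sh ∘ sh` maps every
generator to some `σᵢ` with `i ≥ 3`. -/

section ShiftedConjugation

variable {G : Type*} [Group G] (sh : G →* G) (s : G)

def shiftedConj (a b : G) : G :=
  a * sh b * s * (sh a)⁻¹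

theorem shiftedConj_self_distrib (hbraid : s * sh s * s = sh s * s * sh s)
    (hcomm : ∀ x, Commute s (sh (sh x))) (a b c : G) :
    shiftedConj sh s a (shiftedConj sh s b c) =
      shiftedConj sh s (shiftedConj sh s a b) (shiftedConj sh s a c) := by
  set t := sh s
  set A := sh (sh a)
  set B := sh (sh b)
  set C := sh (sh c)
  have hA : A⁻¹ * s * A = s := (hcomm a).symm.inv_mul_cancel
  have hB : B⁻¹ * s = s * B⁻¹ := (hcomm b).inv_right.eq.symm
  have hC : s * C * s⁻¹ = C := (hcomm c).mul_inv_cancel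
  have hconj : t * s * t⁻¹ = s⁻¹ * t * s := by
    rw [mul_inv_eq_iff_eq_mul, mul_assoc, mul_assoc, ← mul_assoc t, ← hbraid]; group
  simp only [shiftedConj, map_mul, map_inv]
  calc a * (sh b * C * t * B⁻¹) * s * (sh a)⁻¹
      = a * sh b * C * t * (B⁻¹ * s) * (sh a)⁻¹ := by group
    _ = a * sh b * (s * C * s⁻¹) * t * s * B⁻¹ * (sh a)⁻¹ := by rw [hB, hC]; group
    _ = a * sh b * s * C * (s⁻¹ * t * s) * B⁻¹ * (sh a)⁻¹ := by group
    _ = a * sh b * s * C * (t * (A⁻¹ * s * A) * t⁻¹) * B⁻¹ * (sh a)⁻¹ := by rw [hA, hconj]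
    _ = a * sh b * s * (sh a)⁻¹ * (sh a * C * t * A⁻¹) * s * (sh a * B * t * A⁻¹)⁻¹ := by group

end ShiftedConjugation

theorem commute_σ_σ_of_add_two_le {i j : ℕ} (h : i + 2 ≤ j) : Commute (σ i) (σ j) :=
  mul_inv_eq_iff_eq_mul.mp <| mul_inv_eq_one.mp <|
    PresentedGroup.one_of_mem ⟨i, j, .inl ⟨h, rfl⟩⟩

theorem σ_braid (i : ℕ) : σ i * σ (i + 1) * σ i = σ (i + 1) * σ i * σ (i + 1) :=
  mul_inv_eq_iff_eq_mul.mp <| mul_inv_eq_iff_eq_mul.mp <| mul_inv_eq_one.mp <|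
    PresentedGroup.one_of_mem ⟨i, i + 1, .inr ⟨rfl, rfl⟩⟩

theorem commute_σ_zero_sh_sh (sh : BInf →* BInf) (hsh : ∀ i : ℕ, sh (σ i) = σ (i + 1))
    (x : BInf) : Commute (σ 0) (sh (sh x)) := by
  have hfix : (MulAut.conj (σ 0)).toMonoidHom.comp (sh.comp sh) = sh.comp sh :=
    PresentedGroup.ext fun i => by
      change σ 0 * sh (sh (σ i)) * (σ 0)⁻¹ = sh (sh (σ i))
      rw [hsh, hsh]
      exact (commute_σ_σ_of_add_two_le (by omega)).mul_inv_cancel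
  exact mul_inv_eq_iff_eq_mul.mp (DFunLike.congr_fun hfix x)

theorem braidAct_self_distrib (sh : BInf →* BInf) (hsh : ∀ i : ℕ, sh (σ i) = σ (i + 1))
    (a b c : BInf) :
    braidAct sh a (braidAct sh b c) = braidAct sh (braidAct sh a b) (braidAct sh a c) :=
  shiftedConj_self_distrib sh (σ 0) (by rw [hsh]; exact σ_braid 0)
    (commute_σ_zero_sh_sh sh hsh) a b c
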